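/- If X is a strongly star-Lindelöf space and X is the union of fewer than 𝔡 many Hurewicz subspaces, then X is strongly star-Menger. -/

import Mathlib

open Set Filter Topology

/-- `𝒰` is an open cover of the space `X`. -/
def IsOpenCover {X : Type} [TopologicalSpace X] (𝒰 : Set (Set X)) : Prop :=
  (∀ u ∈ 𝒰, IsOpen u) ∧ ⋃₀ 𝒰 = Set.univ

/-- The star of a set `A` with respect to a collection `𝒰`. -/
def st {X : Type} (A : Set X) (𝒰 : Set (Set X)) : Set X :=
  ⋃₀ {u ∈ 𝒰 | (u ∩ A).Nonempty}
/-- Eventual domination `f ≤* g`. -/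
def EvLE (f g : ℕ → ℕ) : Prop := ∀ᶠ n in Filter.atTop, f n ≤ g n

/-- The dominating number `𝔡`. -/
noncomputable def dominatingNumber : Cardinal :=
  sInf {c | ∃ D : Set (ℕ → ℕ),
    (∀ g : ℕ → ℕ, ∃ f ∈ D, EvLE g f) ∧ Cardinal.mk D = c}

/-- The bounding number `𝔟`. -/
noncomputable def boundingNumber : Cardinal :=
  sInf {c | ∃ B : Set (ℕ → ℕ),
    (¬ ∃ g : ℕ → ℕ, ∀ f ∈ B, EvLE f g) ∧ Cardinal.mk B = c}
/-- The Menger property `S_fin(𝒪,𝒪)`. -/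
def MengerSpace (X : Type) [TopologicalSpace X] : Prop :=
  ∀ 𝒰 : ℕ → Set (Set X), (∀ n, IsOpenCover (𝒰 n)) →
    ∃ 𝒱 : ℕ → Set (Set X), (∀ n, (𝒱 n).Finite ∧ 𝒱 n ⊆ 𝒰 n) ∧
      ∀ x : X, ∃ n, x ∈ ⋃₀ 𝒱 n

/-- The Hurewicz property. -/
def HurewiczSpace (X : Type) [TopologicalSpace X] : Prop :=
  ∀ 𝒰 : ℕ → Set (Set X), (∀ n, IsOpenCover (𝒰 n)) →
    ∃ 𝒱 : ℕ → Set (Set X), (∀ n, (𝒱 n).Finite ∧ 𝒱 n ⊆ 𝒰 n) ∧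
      ∀ x : X, ∀ᶠ n in Filter.atTop, x ∈ ⋃₀ 𝒱 n

/-- The star-Menger property. -/
def StarMengerSpace (X : Type) [TopologicalSpace X] : Prop :=
  ∀ 𝒰 : ℕ → Set (Set X), (∀ n, IsOpenCover (𝒰 n)) →
    ∃ 𝒱 : ℕ → Set (Set X), (∀ n, (𝒱 n).Finite ∧ 𝒱 n ⊆ 𝒰 n) ∧
      ∀ x : X, ∃ n, x ∈ st (⋃₀ 𝒱 n) (𝒰 n)

/-- The star-Hurewicz property. -/
def StarHurewiczSpace (X : Type) [TopologicalSpace X] : Prop :=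
  ∀ 𝒰 : ℕ → Set (Set X), (∀ n, IsOpenCover (𝒰 n)) →
    ∃ 𝒱 : ℕ → Set (Set X), (∀ n, (𝒱 n).Finite ∧ 𝒱 n ⊆ 𝒰 n) ∧
      ∀ x : X, ∀ᶠ n in Filter.atTop, x ∈ st (⋃₀ 𝒱 n) (𝒰 n)

/-- The strongly star-Menger property. -/
def StronglyStarMengerSpace (X : Type) [TopologicalSpace X] : Prop :=
  ∀ 𝒰 : ℕ → Set (Set X), (∀ n, IsOpenCover (𝒰 n)) →
    ∃ F : ℕ → Set X, (∀ n, (F n).Finite) ∧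
      ∀ x : X, ∃ n, x ∈ st (F n) (𝒰 n)

/-- The strongly star-Hurewicz property. -/
def StronglyStarHurewiczSpace (X : Type) [TopologicalSpace X] : Prop :=
  ∀ 𝒰 : ℕ → Set (Set X), (∀ n, IsOpenCover (𝒰 n)) →
    ∃ F : ℕ → Set X, (∀ n, (F n).Finite) ∧
      ∀ x : X, ∀ᶠ n in Filter.atTop, x ∈ st (F n) (𝒰 n)

/-- The star-Lindelöf property. -/
def StarLindelofSpace (X : Type) [TopologicalSpace X] : Prop :=
  ∀ 𝒰 : Set (Set X), IsOpenCover 𝒰 →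
    ∃ 𝒱 ⊆ 𝒰, 𝒱.Countable ∧ st (⋃₀ 𝒱) 𝒰 = Set.univ

/-- The strongly star-Lindelöf property. -/
def StronglyStarLindelofSpace (X : Type) [TopologicalSpace X] : Prop :=
  ∀ 𝒰 : Set (Set X), IsOpenCover 𝒰 →
    ∃ C : Set X, C.Countable ∧ st C 𝒰 = Set.univ


/-!
For each cover `𝒰 n` enumerate a countable `C` with `St(C, 𝒰 n) = X`; the stars of the finite
initial segments of `C` form an increasing open cover `(V n k)ₖ`. Since finitely many members of an
increasing cover lie in a single one, the Hurewicz property of each piece `Y i` gives `fᵢ : ℕ → ℕ`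
with `x ∈ V n (fᵢ n)` for almost all `n`, for every `x ∈ Y i`. Fewer than `𝔡` functions do not
dominate, so some `g` lies above every `fᵢ` infinitely often, and the initial segments of length
`g n` witness the strong star-Menger property.
-/

lemma st_mono {X : Type} {A B : Set X} (h : A ⊆ B) (𝒰 : Set (Set X)) : st A 𝒰 ⊆ st B 𝒰 :=
  sUnion_subset_sUnion fun _ ⟨hu, y, hyu, hyA⟩ => ⟨hu, y, hyu, h hyA⟩

lemma isOpen_st {X : Type} [TopologicalSpace X] {𝒰 : Set (Set X)} (h𝒰 : IsOpenCover 𝒰)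
    (A : Set X) : IsOpen (st A 𝒰) :=
  isOpen_sUnion fun u hu => h𝒰.1 u hu.1

/-- The finite initial segments of an enumeration of a countable star-kernel. -/
lemma StronglyStarLindelofSpace.exists_monotone_finite {X : Type} [TopologicalSpace X]
    (hX : StronglyStarLindelofSpace X) {𝒰 : Set (Set X)} (h𝒰 : IsOpenCover 𝒰) :
    ∃ F : ℕ → Set X, (∀ k, (F k).Finite) ∧ Monotone F ∧ ∀ x, ∃ k, x ∈ st (F k) 𝒰 := by
  obtain ⟨C, hC, hCst⟩ := hX 𝒰 h𝒰
  rcases C.eq_empty_or_nonempty with rfl | hCne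
  · refine ⟨fun _ => ∅, fun _ => finite_empty, monotone_const, fun x => ⟨0, ?_⟩⟩
    rw [hCst]
    trivial
  obtain ⟨c, rfl⟩ := hC.exists_eq_range hCne
  refine ⟨fun k => c '' Iic k, fun k => (finite_Iic k).image c,
    fun j k hjk => image_mono (Iic_subset_Iic.2 hjk), fun x => ?_⟩
  obtain ⟨u, ⟨hu, _, hyu, j, rfl⟩, hxu⟩ := hCst.symm ▸ mem_univ x
  exact ⟨j, u, ⟨hu, c j, hyu, j, self_mem_Iic, rfl⟩, hxu⟩

lemma exists_sUnion_subset_of_finite_subset_range {Z : Type} {V : ℕ → Set Z} (hV : Monotone V)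
    {S : Set (Set Z)} (hS : S.Finite) (hSV : S ⊆ range V) : ∃ m, ⋃₀ S ⊆ V m := by
  choose k hk using fun s : S => hSV s.2
  have := hS.to_subtype
  obtain ⟨m, hm⟩ := Finite.exists_le k
  exact ⟨m, fun x ⟨s, hs, hxs⟩ => hV (hm ⟨s, hs⟩) ((hk ⟨s, hs⟩).symm ▸ hxs)⟩

lemma HurewiczSpace.exists_eventually_mem {Z : Type} [TopologicalSpace Z] (hZ : HurewiczSpace Z)
    {V : ℕ → ℕ → Set Z} (hopen : ∀ n k, IsOpen (V n k)) (hmono : ∀ n, Monotone (V n))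
    (hcover : ∀ n z, ∃ k, z ∈ V n k) :
    ∃ f : ℕ → ℕ, ∀ z, ∀ᶠ n in atTop, z ∈ V n (f n) := by
  have hcov : ∀ n, IsOpenCover (range (V n)) := fun n =>
    ⟨forall_mem_range.2 (hopen n), eq_univ_of_forall fun z =>
      let ⟨k, hk⟩ := hcover n z; ⟨V n k, mem_range_self k, hk⟩⟩
  obtain ⟨𝒱, h𝒱, hmem⟩ := hZ _ hcov
  choose f hf using fun n =>
    exists_sUnion_subset_of_finite_subset_range (hmono n) (h𝒱 n).1 (h𝒱 n).2
  exact ⟨f, fun z => (hmem z).mono fun n hn => hf n hn⟩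

lemma HurewiczSpace.exists_eventually_mem_of_subtype {X : Type} [TopologicalSpace X] {Y : Set X}
    (hY : HurewiczSpace Y) {V : ℕ → ℕ → Set X} (hopen : ∀ n k, IsOpen (V n k))
    (hmono : ∀ n, Monotone (V n)) (hcover : ∀ n x, ∃ k, x ∈ V n k) :
    ∃ f : ℕ → ℕ, ∀ x ∈ Y, ∀ᶠ n in atTop, x ∈ V n (f n) := by
  obtain ⟨f, hf⟩ := hY.exists_eventually_mem (V := fun n k => Subtype.val ⁻¹' V n k)
    (fun n k => (hopen n k).preimage continuous_subtype_val)
    (fun n _ _ hjk => preimage_mono (hmono n hjk)) (fun n y => hcover n y)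
  exact ⟨f, fun x hx => hf ⟨x, hx⟩⟩

lemma exists_frequently_lt_of_mk_lt_dominatingNumber {ι : Type}
    (hcard : Cardinal.mk ι < dominatingNumber) (f : ι → ℕ → ℕ) :
    ∃ g : ℕ → ℕ, ∀ i, ∃ᶠ n in atTop, f i n < g n := by
  by_contra! h
  have hdom : dominatingNumber ≤ Cardinal.mk (range f) :=
    csInf_le' ⟨range f, fun g => let ⟨i, hi⟩ := h g; ⟨f i, mem_range_self i, hi⟩, rfl⟩
  exact (hdom.trans Cardinal.mk_range_le).not_gt hcard

theorem stmt (X : Type) [TopologicalSpace X] (hX : StronglyStarLindelofSpace X)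
    (ι : Type) (Y : ι → Set X)
    (hcard : Cardinal.mk ι < dominatingNumber)
    (hY : ∀ i, HurewiczSpace (Y i))
    (hcover : ⋃ i, Y i = Set.univ) :
    StronglyStarMengerSpace X := by
  intro 𝒰 h𝒰
  choose F hFfin hFmono hFcover using fun n => hX.exists_monotone_finite (h𝒰 n)
  have hf : ∀ i, ∃ f : ℕ → ℕ, ∀ x ∈ Y i, ∀ᶠ n in atTop, x ∈ st (F n (f n)) (𝒰 n) := fun i =>
    (hY i).exists_eventually_mem_of_subtype (fun n k => isOpen_st (h𝒰 n) _)
      (fun n _ _ hjk => st_mono (hFmono n hjk) _) hFcover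
  choose f hf using hf
  obtain ⟨g, hg⟩ := exists_frequently_lt_of_mk_lt_dominatingNumber hcard f
  refine ⟨fun n => F n (g n), fun n => hFfin n _, fun x => ?_⟩
  obtain ⟨i, hi⟩ := mem_iUnion.1 (hcover.symm ▸ mem_univ x)
  obtain ⟨n, hlt, hxn⟩ := ((hg i).and_eventually (hf i x hi)).exists
  exact ⟨n, st_mono (hFmono n hlt.le) _ hxn⟩
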